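/- For a bounded open convex domain Ω ⊂ ℝⁿ, F_Ω(x,y) = sup over all support hyperplanes H of Ω of log(dist(x,H)/dist(y,H)), where dist denotes Euclidean distance to the hyperplane. -/

import Mathlib

open Real
open scoped Classical

/-- The Funk weak metric on a domain `Ω ⊆ ℝⁿ`: if the ray from `x` through `y`
meets the boundary `∂Ω` at a point `a = x + t • (y - x)` with `t ≥ 1`, then
`F_Ω(x,y) = log (|x - a| / |y - a|)`; otherwise (in particular if the ray is
contained in `Ω`, or if `x = y`) it is `0`. -/
noncomputable def funk {n : ℕ} (Ω : Set (EuclideanSpace ℝ (Fin n)))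
    (x y : EuclideanSpace ℝ (Fin n)) : ℝ :=
  if h : ∃ t : ℝ, 1 ≤ t ∧ x + t • (y - x) ∈ frontier Ω then
    Real.log (dist x (x + h.choose • (y - x)) / dist y (x + h.choose • (y - x)))
  else 0

/-!
Let `a = x + t • (y - x)`, `t > 1`, be the point where the ray from `x` through `y` leaves `Ω`,
so that `F_Ω(x, y) = log (t / (t - 1))`. The distance to a hyperplane `{h = c}` is proportional
to `|h - c|`, and `h` is affine along the ray, so the ratio of distances is
`|h x - c| / |h y - c|`. A hyperplane missing the convex set `Ω` keeps it on one side, and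
`a ∈ closure Ω` lies weakly on that side too; this forces the ratio to be at most `t / (t - 1)`.
A hyperplane supporting `Ω` at `a` itself, which exists by Hahn–Banach, attains the bound.
-/

open Metric
open scoped InnerProductSpace

theorem funk_self {n : ℕ} (Ω : Set (EuclideanSpace ℝ (Fin n))) (x : EuclideanSpace ℝ (Fin n)) :
    funk Ω x x = 0 := by
  unfold funk
  split_ifs <;> simp

section HyperplaneDistance

variable {E : Type*} [NormedAddCommGroup E] [InnerProductSpace ℝ E]

theorem infDist_setOf_inner_eq {v : E} (hv : v ≠ 0) (c : ℝ) (x : E) :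
    infDist x {z | ⟪v, z⟫_ℝ = c} = |⟪v, x⟫_ℝ - c| / ‖v‖ := by
  have hv' : 0 < ‖v‖ := norm_pos_iff.mpr hv
  -- the foot of the perpendicular from `x`
  set p := x - ((⟪v, x⟫_ℝ - c) / ‖v‖ ^ 2) • v
  have hp : ⟪v, p⟫_ℝ = c := by
    simp only [p, inner_sub_right, real_inner_smul_right, real_inner_self_eq_norm_sq]
    field_simp
    ring
  refine le_antisymm ?_ ((le_infDist ⟨p, hp⟩).mpr fun z (hz : ⟪v, z⟫_ℝ = c) => ?_)
  · calc infDist x {z | ⟪v, z⟫_ℝ = c} ≤ dist x p := infDist_le_dist_of_mem hp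
      _ = |⟪v, x⟫_ℝ - c| / ‖v‖ := by
        rw [dist_eq_norm, sub_sub_cancel, norm_smul, norm_div, norm_pow, Real.norm_eq_abs,
          Real.norm_eq_abs, abs_norm]
        field_simp
  · rw [div_le_iff₀ hv', dist_eq_norm, mul_comm, ← hz, ← inner_sub_right]
    exact abs_real_inner_le_norm v (x - z)

theorem infDist_setOf_apply_eq [CompleteSpace E] {f : StrongDual ℝ E} (hf : f ≠ 0) (c : ℝ)
    (x : E) : infDist x {z | f z = c} = |f x - c| / ‖f‖ := by
  have hv : (InnerProductSpace.toDual ℝ E).symm f ≠ 0 := by simpa using hf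
  simpa using infDist_setOf_inner_eq hv c x

theorem infDist_div_infDist_setOf_apply_eq [FiniteDimensional ℝ E] {f : E →ₗ[ℝ] ℝ} (hf : f ≠ 0)
    (c : ℝ) (x y : E) :
    infDist x {z | f z = c} / infDist y {z | f z = c} = |f x - c| / |f y - c| := by
  set g := LinearMap.toContinuousLinearMap f
  have hg : g ≠ 0 := by simpa [g] using hf
  have hdist : ∀ w, infDist w {z | f z = c} = |f w - c| / ‖g‖ := infDist_setOf_apply_eq hg c
  rw [hdist, hdist, div_div_div_cancel_right₀ (norm_ne_zero_iff.mpr hg)]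

end HyperplaneDistance

theorem IsPreconnected.inter_frontier_nonempty {X : Type*} [TopologicalSpace X] {s t : Set X}
    (ht : IsPreconnected t) (hts : (t ∩ s).Nonempty) (hts' : (t \ s).Nonempty) :
    (t ∩ frontier s).Nonempty := by
  by_contra hempty
  have hinterior : ∀ z ∈ t, z ∈ s → z ∈ interior s := fun z hz hzs =>
    by_contra fun hzi => hempty ⟨z, hz, subset_closure hzs, hzi⟩
  have hcover : t ⊆ interior s ∪ (closure s)ᶜ := fun z hz => by
    by_cases hzs : z ∈ s
    · exact .inl (hinterior z hz hzs)
    · exact .inr fun hzc => hempty ⟨z, hz, hzc, fun hzi => hzs (interior_subset hzi)⟩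
  obtain ⟨w, hwt, hws⟩ := hts
  obtain ⟨z, hzt, hzs⟩ := hts'
  have hsub := ht.subset_left_of_subset_union isOpen_interior isClosed_closure.isOpen_compl
    (disjoint_compl_right.mono_left interior_subset_closure) hcover
    ⟨w, hwt, hinterior w hwt hws⟩
  exact hzs (interior_subset (hsub hzt))

section Ray

variable {E : Type*} [NormedAddCommGroup E] [NormedSpace ℝ E]

theorem dist_div_dist_add_smul_sub {x y : E} (hxy : y ≠ x) (t : ℝ) :
    dist x (x + t • (y - x)) / dist y (x + t • (y - x)) = |t| / |t - 1| := by
  have hline : x + t • (y - x) = AffineMap.lineMap x y t := by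
    rw [AffineMap.lineMap_apply_module', add_comm]
  rw [hline, dist_comm x, dist_comm y, dist_lineMap_left, dist_lineMap_right,
    mul_div_mul_right _ _ (dist_ne_zero.mpr hxy.symm), Real.norm_eq_abs, Real.norm_eq_abs,
    abs_sub_comm]

theorem exists_one_le_add_smul_sub_mem_frontier {s : Set E} (hs : Bornology.IsBounded s)
    {x y : E} (hy : y ∈ s) (hxy : y ≠ x) : ∃ t : ℝ, 1 ≤ t ∧ x + t • (y - x) ∈ frontier s := by
  set ray : ℝ → E := fun t => x + t • (y - x)
  obtain ⟨r, hr⟩ := hs.subset_closedBall x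
  have hyx : 0 < ‖y - x‖ := norm_pos_iff.mpr (sub_ne_zero.mpr hxy)
  set T := max 1 ((r + 1) / ‖y - x‖)
  have hT : ray T ∉ s := fun hmem => by
    have hle := hr hmem
    rw [mem_closedBall, dist_eq_norm, add_sub_cancel_left, norm_smul, Real.norm_eq_abs,
      abs_of_pos (lt_of_lt_of_le one_pos (le_max_left _ _))] at hle
    have := (div_le_iff₀ hyx).mp (le_max_right 1 ((r + 1) / ‖y - x‖))
    linarith
  have hconn : IsPreconnected (ray '' Set.Ici 1) :=
    isPreconnected_Ici.image ray (by fun_prop)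
  obtain ⟨_, ⟨t, ht, rfl⟩, hfr⟩ := hconn.inter_frontier_nonempty
    ⟨y, ⟨1, Set.self_mem_Ici, by simp [ray]⟩, hy⟩
    ⟨ray T, ⟨T, Set.mem_Ici.mpr (le_max_left _ _), rfl⟩, hT⟩
  exact ⟨t, ht, hfr⟩

end Ray

section SupportHyperplane

theorem Convex.forall_lt_or_forall_gt_of_forall_ne {E : Type*} [AddCommGroup E] [Module ℝ E]
    {s : Set E} (hs : Convex ℝ s) (f : E →ₗ[ℝ] ℝ) {c : ℝ} (hc : ∀ z ∈ s, f z ≠ c) :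
    (∀ z ∈ s, f z < c) ∨ ∀ z ∈ s, c < f z := by
  by_contra! h
  obtain ⟨⟨z₁, hz₁, h₁⟩, z₂, hz₂, h₂⟩ := h
  obtain ⟨z, hz, hzc⟩ :=
    (hs.linear_image f).ordConnected.out ⟨z₂, hz₂, rfl⟩ ⟨z₁, hz₁, rfl⟩ ⟨h₂, h₁⟩
  exact hc z hz hzc

theorem abs_sub_div_abs_sub_le_of_lt {p q c t : ℝ} (ht : 1 < t) (hp : p < c) (hq : q < c)
    (hpq : p + t * (q - p) ≤ c) : |p - c| / |q - c| ≤ t / (t - 1) := by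
  rw [abs_of_neg (sub_neg.mpr hp), abs_of_neg (sub_neg.mpr hq),
    div_le_div_iff₀ (by linarith) (by linarith)]
  nlinarith

theorem abs_sub_div_abs_sub_add_mul_sub {p q t : ℝ} (hpq : p ≠ q) (ht : 1 < t) :
    |p - (p + t * (q - p))| / |q - (p + t * (q - p))| = t / (t - 1) := by
  have hp : p - (p + t * (q - p)) = -(t * (q - p)) := by ring
  have hq : q - (p + t * (q - p)) = -((t - 1) * (q - p)) := by ring
  rw [hp, hq, abs_neg, abs_neg, abs_mul, abs_mul, abs_of_pos (by linarith : 0 < t),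
    abs_of_pos (by linarith : 0 < t - 1),
    mul_div_mul_right _ _ (abs_ne_zero.mpr (sub_ne_zero.mpr hpq.symm))]

variable {E : Type*} [NormedAddCommGroup E] [NormedSpace ℝ E]

theorem Convex.exists_forall_lt_abs_sub_div_abs_sub_eq {s : Set E} (hs : Convex ℝ s)
    (hs' : IsOpen s) {x y : E} (hx : x ∈ s) {t : ℝ} (ht : 1 < t) (ha : x + t • (y - x) ∉ s) :
    ∃ f : StrongDual ℝ E, (∀ z ∈ s, f z < f (x + t • (y - x))) ∧
      |f x - f (x + t • (y - x))| / |f y - f (x + t • (y - x))| = t / (t - 1) := by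
  obtain ⟨f, hf⟩ := geometric_hahn_banach_open_point hs hs' ha
  have hfa : f (x + t • (y - x)) = f x + t * (f y - f x) := by
    simp only [map_add, map_smul, map_sub, smul_eq_mul]
  have hfxy : f x ≠ f y := fun h => by simpa [hfa, h] using hf x hx
  exact ⟨f, hf, by rw [hfa, abs_sub_div_abs_sub_add_mul_sub hfxy ht]⟩

theorem Convex.abs_sub_div_abs_sub_le_of_mem_closure [FiniteDimensional ℝ E] {s : Set E}
    (hs : Convex ℝ s) {f : E →ₗ[ℝ] ℝ} {c : ℝ} (hc : ∀ z ∈ s, f z ≠ c) {x y : E} (hx : x ∈ s)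
    (hy : y ∈ s) {t : ℝ} (ht : 1 < t) (ha : x + t • (y - x) ∈ closure s) :
    |f x - c| / |f y - c| ≤ t / (t - 1) := by
  have hfa : f (x + t • (y - x)) = f x + t * (f y - f x) := by
    simp only [map_add, map_smul, map_sub, smul_eq_mul]
  have hf := f.continuous_of_finiteDimensional
  rcases hs.forall_lt_or_forall_gt_of_forall_ne f hc with hlt | hgt
  · have hac : f (x + t • (y - x)) ≤ c :=
      closure_minimal (fun z hz => (hlt z hz).le) (isClosed_le hf continuous_const) ha
    exact abs_sub_div_abs_sub_le_of_lt ht (hlt x hx) (hlt y hy) (hfa ▸ hac)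
  · have hac : c ≤ f (x + t • (y - x)) :=
      closure_minimal (fun z hz => (hgt z hz).le) (isClosed_le continuous_const hf) ha
    have := abs_sub_div_abs_sub_le_of_lt ht (neg_lt_neg (hgt x hx)) (neg_lt_neg (hgt y hy))
      (by linarith)
    rwa [neg_sub_neg, neg_sub_neg, abs_sub_comm c, abs_sub_comm c] at this

end SupportHyperplane

theorem funk_eq_sup_support_hyperplanes_general {n : ℕ} (Ω : Set (EuclideanSpace ℝ (Fin n)))
    (hopen : IsOpen Ω) (hconv : Convex ℝ Ω)
    (hbdd : Bornology.IsBounded Ω)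
    (x y : EuclideanSpace ℝ (Fin n)) (hx : x ∈ Ω) (hy : y ∈ Ω) :
    funk Ω x y = sSup {r : ℝ | ∃ (h : EuclideanSpace ℝ (Fin n) →ₗ[ℝ] ℝ) (c : ℝ),
      h ≠ 0 ∧ (∀ z ∈ Ω, h z ≠ c) ∧ (∃ a ∈ closure Ω, h a = c) ∧
      r = Real.log (Metric.infDist x {z | h z = c} / Metric.infDist y {z | h z = c})} := by
  rcases eq_or_ne y x with rfl | hxy
  · rw [funk_self]
    refine le_antisymm (Real.sSup_nonneg ?_) (Real.sSup_nonpos ?_) <;>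
      rintro _ ⟨h, c, -, -, -, rfl⟩ <;> simp
  have hex := exists_one_le_add_smul_sub_mem_frontier hbdd hy hxy
  rw [funk, dif_pos hex]
  obtain ⟨ht1, hfr⟩ := hex.choose_spec
  set t := hex.choose
  have haΩ : x + t • (y - x) ∉ Ω := fun ha => (hopen.inter_frontier_eq.subset ⟨ha, hfr⟩ :)
  have ht : 1 < t := ht1.lt_of_ne fun h => haΩ (by rwa [← h, one_smul, add_sub_cancel])
  rw [dist_div_dist_add_smul_sub hxy, abs_of_pos (by linarith), abs_of_pos (by linarith)]
  obtain ⟨f, hf, hratio⟩ := hconv.exists_forall_lt_abs_sub_div_abs_sub_eq hopen hx ht haΩ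
  have hf0 : (f : EuclideanSpace ℝ (Fin n) →ₗ[ℝ] ℝ) ≠ 0 := fun h0 =>
    (hf x hx).ne (by rw [← ContinuousLinearMap.coe_coe, h0]; rfl)
  refine (IsGreatest.csSup_eq ⟨?_, ?_⟩).symm
  · refine ⟨f, f (x + t • (y - x)), hf0, fun z hz => (hf z hz).ne,
      ⟨_, frontier_subset_closure hfr, rfl⟩, ?_⟩
    rw [infDist_div_infDist_setOf_apply_eq hf0, ContinuousLinearMap.coe_coe, hratio]
  · rintro _ ⟨h, c, h0, hc, -, rfl⟩
    rw [infDist_div_infDist_setOf_apply_eq h0]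
    refine Real.log_le_log (div_pos ?_ ?_)
      (hconv.abs_sub_div_abs_sub_le_of_mem_closure hc hx hy ht (frontier_subset_closure hfr))
    · exact abs_pos.mpr (sub_ne_zero.mpr (hc x hx))
    · exact abs_pos.mpr (sub_ne_zero.mpr (hc y hy))

theorem funk_eq_sup_support_hyperplanes {n : ℕ} (Ω : Set (EuclideanSpace ℝ (Fin n)))
    (hopen : IsOpen Ω) (hconv : Convex ℝ Ω) (hne : Ω.Nonempty)
    (hbdd : Bornology.IsBounded Ω)
    (x y : EuclideanSpace ℝ (Fin n)) (hx : x ∈ Ω) (hy : y ∈ Ω) :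
    funk Ω x y = sSup {r : ℝ | ∃ (h : EuclideanSpace ℝ (Fin n) →ₗ[ℝ] ℝ) (c : ℝ),
      h ≠ 0 ∧ (∀ z ∈ Ω, h z ≠ c) ∧ (∃ a ∈ closure Ω, h a = c) ∧
      r = Real.log (Metric.infDist x {z | h z = c} / Metric.infDist y {z | h z = c})} :=
  funk_eq_sup_support_hyperplanes_general Ω hopen hconv hbdd x y hx hy
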